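/- Let ℓ ≥ 3 and identify the vertex sets of both P_{2ℓ} and C_{2ℓ} with {1,…,2ℓ}. If W = {w_1,…,w_ℓ} where w_i ∈ {2i−1, 2i} for each i ∈ {1,…,ℓ}, then W is a strictly locating set of P_{2ℓ} and W is a strictly locating set of C_{2ℓ}. -/

import Mathlib

/-- The lexicographic product of two simple graphs. -/
def lexProd {α β : Type*} (G : SimpleGraph α) (H : SimpleGraph β) :
    SimpleGraph (α × β) where
  Adj p q := G.Adj p.1 q.1 ∨ (p.1 = q.1 ∧ H.Adj p.2 q.2)
  symm := by
    constructor
    rintro ⟨g, h⟩ ⟨g', h'⟩ (hg | ⟨rfl, hh⟩)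
    · exact Or.inl hg.symm
    · exact Or.inr ⟨rfl, hh.symm⟩
  loopless := by
    constructor
    rintro ⟨g, h⟩ (hg | ⟨-, hh⟩)
    · exact G.irrefl hg
    · exact H.irrefl hh

/-- `W` is a resolving set of `G`. -/
def IsResolvingSet {α : Type*} (G : SimpleGraph α) (W : Set α) : Prop :=
  ∀ x y : α, x ≠ y → ∃ z ∈ W, G.dist x z ≠ G.dist y z

/-- `S` is a locating set of `G`. -/
def IsLocatingSet {α : Type*} (G : SimpleGraph α) (S : Set α) : Prop :=
  ∀ u ∉ S, ∀ v ∉ S, u ≠ v → G.neighborSet u ∩ S ≠ G.neighborSet v ∩ S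

/-- `S` is a strictly locating set of `G`. -/
def IsStrictlyLocatingSet {α : Type*} (G : SimpleGraph α) (S : Set α) : Prop :=
  IsLocatingSet G S ∧ ∀ u ∉ S, G.neighborSet u ∩ S ≠ S

/-- `S` is a dominating set of `G`. -/
def IsDominatingSet {α : Type*} (G : SimpleGraph α) (S : Set α) : Prop :=
  ∀ v ∉ S, ∃ u ∈ S, G.Adj v u

/-- `u` and `v` are true twins in `G`. -/
def AreTrueTwins {α : Type*} (G : SimpleGraph α) (u v : α) : Prop :=
  G.Adj u v ∧ G.neighborSet u \ {v} = G.neighborSet v \ {u}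

/-- `u` and `v` are false twins in `G`. -/
def AreFalseTwins {α : Type*} (G : SimpleGraph α) (u v : α) : Prop :=
  u ≠ v ∧ ¬ G.Adj u v ∧ G.neighborSet u \ {v} = G.neighborSet v \ {u}

/-- The path on `n` vertices `0, 1, …, n-1` (vertex `i` represents the
vertex labelled `i+1` in `{1, …, n}`). -/
def PathG (n : ℕ) : SimpleGraph (Fin n) where
  Adj i j := (i : ℕ) + 1 = (j : ℕ) ∨ (j : ℕ) + 1 = (i : ℕ)
  symm := ⟨fun i j h => Or.symm h⟩
  loopless := ⟨fun i h => by rcases h with h | h <;> omega⟩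

/-- The cycle on `n` vertices `0, 1, …, n-1` (vertex `i` represents the
vertex labelled `i+1` in `{1, …, n}`). -/
def CycleG (n : ℕ) : SimpleGraph (Fin n) where
  Adj i j := i ≠ j ∧ (((i : ℕ) + 1) % n = (j : ℕ) ∨ ((j : ℕ) + 1) % n = (i : ℕ))
  symm := ⟨fun i j h => ⟨h.1.symm, Or.symm h.2⟩⟩
  loopless := ⟨fun i h => h.1 rfl⟩

/-- The metric dimension of `G`: the minimum cardinality of a resolving set. -/
noncomputable def metricDim {α : Type*} [Fintype α] (G : SimpleGraph α) : ℕ :=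
  sInf {n | ∃ W : Finset α, W.card = n ∧ IsResolvingSet G ↑W}

/-- The set `W ⊆ Fin n` contains the vertex with underlying value `k`. -/
def valMem {n : ℕ} (W : Set (Fin n)) (k : ℕ) : Prop :=
  ∃ x ∈ W, (x : ℕ) = k

/-!
Call the element of `W` in the block `{2k, 2k+1}` of a vertex `u ∉ W` its block-mate; it is a
neighbour of `u`. If distinct `u, v ∉ W` saw the same neighbours in `W`, each would be adjacent to
the other's block-mate, which is impossible in a cycle of length `2ℓ ≥ 6`. No vertex sees all of
`W`, since it has at most two neighbours and `|W| = ℓ ≥ 3`. Both arguments only use that the graph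
contains the block edges and is contained in `C_{2ℓ}`, so they cover `P_{2ℓ}` and `C_{2ℓ}` alike.
-/

lemma cycleG_adj_iff {n : ℕ} {i j : Fin n} :
    (CycleG n).Adj i j ↔ i ≠ j ∧ ((i : ℕ) + 1 = j ∨ (j : ℕ) + 1 = i ∨
      ((i : ℕ) + 1 = n ∧ (j : ℕ) = 0) ∨ ((j : ℕ) + 1 = n ∧ (i : ℕ) = 0)) := by
  have succ_mod : ∀ a b : Fin n, ((a : ℕ) + 1) % n = b ↔
      (a : ℕ) + 1 = b ∨ ((a : ℕ) + 1 = n ∧ (b : ℕ) = 0) := by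
    intro a b
    rcases Nat.lt_or_ge ((a : ℕ) + 1) n with h | h
    · rw [Nat.mod_eq_of_lt h]; omega
    · rw [show (a : ℕ) + 1 = n by omega, Nat.mod_self]; omega
  change i ≠ j ∧ _ ↔ _
  rw [succ_mod, succ_mod]
  tauto

lemma cycleG_eq_cycleGraph (n : ℕ) : CycleG n = SimpleGraph.cycleGraph n := by
  match n with
  | 0 => ext i; exact i.elim0
  | 1 => ext i j; simp [CycleG, Subsingleton.elim i j]
  | n + 2 =>
    ext i j
    have succ_mod : ∀ a b : Fin (n + 2), ((a : ℕ) + 1) % (n + 2) = b ↔ a + 1 = b := by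
      simp [Fin.ext_iff, Fin.val_add]
    change i ≠ j ∧ _ ↔ _
    rw [succ_mod, succ_mod, SimpleGraph.cycleGraph_adj, sub_eq_iff_eq_add, sub_eq_iff_eq_add,
      add_comm (1 : Fin (n + 2)) j, add_comm (1 : Fin (n + 2)) i]
    constructor
    · rintro ⟨-, h | h⟩ <;> simp [h]
    · rintro (h | h)
      · exact ⟨fun hij => by simp [hij] at h, Or.inr h.symm⟩
      · exact ⟨fun hij => by simp [hij] at h, Or.inl h.symm⟩

lemma ncard_neighborSet_cycleG_le (n : ℕ) (u : Fin n) : ((CycleG n).neighborSet u).ncard ≤ 2 := by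
  rw [cycleG_eq_cycleGraph]
  match n with
  | 0 => exact u.elim0
  | 1 => simp [SimpleGraph.cycleGraph_one_eq_bot]
  | n + 2 =>
    rw [SimpleGraph.cycleGraph_neighborSet]
    exact (Set.ncard_insert_le _ _).trans (by rw [Set.ncard_singleton])

lemma pathG_le_cycleG (n : ℕ) : PathG n ≤ CycleG n := fun i j h =>
  cycleG_adj_iff.2 ⟨Fin.ne_of_val_ne (by rcases h with h | h <;> omega), by
    rcases h with h | h <;> simp [h]⟩

lemma isLocatingSet_of_partner {V : Type*} {G : SimpleGraph V} {S : Set V} (p : V → V)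
    (hpS : ∀ u ∉ S, p u ∈ S) (hadj : ∀ u ∉ S, G.Adj u (p u))
    (hsep : ∀ u ∉ S, ∀ v ∉ S, u ≠ v → G.Adj v (p u) → ¬ G.Adj u (p v)) :
    IsLocatingSet G S := by
  intro u hu v hv huv hN
  have hpu : p u ∈ G.neighborSet v ∩ S := hN ▸ ⟨hadj u hu, hpS u hu⟩
  have hpv : p v ∈ G.neighborSet u ∩ S := hN ▸ ⟨hadj v hv, hpS v hv⟩
  exact hsep u hu v hv huv hpu.1 hpv.1

lemma neighborSet_inter_ne_self_of_ncard_lt {V : Type*} {G : SimpleGraph V} {S : Set V} {u : V}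
    (hfin : (G.neighborSet u).Finite) (h : (G.neighborSet u).ncard < S.ncard) :
    G.neighborSet u ∩ S ≠ S := fun hN =>
  (Set.ncard_le_ncard (Set.inter_eq_right.mp hN) hfin).not_gt h

section Transversal

variable {ℓ : ℕ} {w : Fin ℓ → Fin (2 * ℓ)}

def blockIndex (u : Fin (2 * ℓ)) : Fin ℓ := ⟨u / 2, by omega⟩

@[simp]
lemma val_blockIndex (u : Fin (2 * ℓ)) : (blockIndex u : ℕ) = u / 2 := rfl

variable (hw : ∀ i : Fin ℓ, (w i : ℕ) = 2 * (i : ℕ) ∨ (w i : ℕ) = 2 * (i : ℕ) + 1)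
include hw

lemma ncard_range_eq_of_mem_block : (Set.range w).ncard = ℓ := by
  have hinj : Function.Injective w := fun i j hij => by
    have := hw i; have := hw j; have := congrArg Fin.val hij; omega
  rw [Set.ncard_range_of_injective hinj, Nat.card_eq_fintype_card, Fintype.card_fin]

lemma blockMate_of_not_mem_range {u : Fin (2 * ℓ)} (hu : u ∉ Set.range w) :
    (w (blockIndex u) : ℕ) / 2 = u / 2 ∧ w (blockIndex u) ≠ u := by
  refine ⟨by have := hw (blockIndex u); rw [val_blockIndex] at this; omega, fun h => hu ⟨_, h⟩⟩

/-- Such a `v` is two steps from `u` and its block-mate three steps from `u`, which wraps around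
to a neighbour of `u` only when `2 * ℓ = 4`. -/
lemma cycleG_not_adj_blockMate (hℓ : 3 ≤ ℓ) {u v : Fin (2 * ℓ)} (hu : u ∉ Set.range w)
    (hv : v ∉ Set.range w) (huv : u ≠ v) (hvu : (CycleG (2 * ℓ)).Adj v (w (blockIndex u))) :
    ¬ (CycleG (2 * ℓ)).Adj u (w (blockIndex v)) := by
  intro huv'
  obtain ⟨hbu, hpu⟩ := blockMate_of_not_mem_range hw hu
  obtain ⟨hbv, hpv⟩ := blockMate_of_not_mem_range hw hv
  have hvpu : v ≠ w (blockIndex u) := fun h => hv ⟨_, h.symm⟩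
  have hupv : u ≠ w (blockIndex v) := fun h => hu ⟨_, h.symm⟩
  rw [cycleG_adj_iff] at hvu huv'
  simp only [ne_eq, Fin.ext_iff] at hpu hpv hvpu hupv huv
  omega

theorem isStrictlyLocatingSet_range_of_le_cycleG (hℓ : 3 ≤ ℓ) {G : SimpleGraph (Fin (2 * ℓ))}
    (hM : ∀ a b : Fin (2 * ℓ), a ≠ b → (a : ℕ) / 2 = b / 2 → G.Adj a b)
    (hC : G ≤ CycleG (2 * ℓ)) :
    IsStrictlyLocatingSet G (Set.range w) := by
  refine ⟨isLocatingSet_of_partner (fun u => w (blockIndex u)) (fun u _ => ⟨_, rfl⟩)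
    (fun u hu => ?_) (fun u hu v hv huv hvu huv' => ?_), fun u _ => ?_⟩
  · obtain ⟨hb, hp⟩ := blockMate_of_not_mem_range hw hu
    exact hM _ _ hp.symm hb.symm
  · exact cycleG_not_adj_blockMate hw hℓ hu hv huv (hC hvu) (hC huv')
  · refine neighborSet_inter_ne_self_of_ncard_lt (Set.toFinite _) ?_
    calc (G.neighborSet u).ncard
        ≤ ((CycleG (2 * ℓ)).neighborSet u).ncard := Set.ncard_le_ncard fun x hx => hC hx
      _ ≤ 2 := ncard_neighborSet_cycleG_le _ u
      _ < (Set.range w).ncard := by rw [ncard_range_eq_of_mem_block hw]; omega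

end Transversal

/-- For `ℓ ≥ 3`, a set consisting of one vertex from each pair
`{2i-1, 2i}`, `i ∈ [ℓ]` (in `Fin (2ℓ)` labelling: one of `2i, 2i+1` for each
`i ∈ Fin ℓ`), is a strictly locating set of `P_{2ℓ}` and of `C_{2ℓ}`. -/
theorem stmt13 (ℓ : ℕ) (hℓ : 3 ≤ ℓ) (w : Fin ℓ → Fin (2 * ℓ))
    (hw : ∀ i : Fin ℓ, (w i : ℕ) = 2 * (i : ℕ) ∨ (w i : ℕ) = 2 * (i : ℕ) + 1) :
    IsStrictlyLocatingSet (PathG (2 * ℓ)) (Set.range w) ∧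
    IsStrictlyLocatingSet (CycleG (2 * ℓ)) (Set.range w) := by
  have hM : ∀ a b : Fin (2 * ℓ), a ≠ b → (a : ℕ) / 2 = b / 2 → (PathG (2 * ℓ)).Adj a b :=
    fun a b hab hblock => by
      have := Fin.val_ne_of_ne hab
      change (a : ℕ) + 1 = b ∨ (b : ℕ) + 1 = a
      omega
  exact ⟨isStrictlyLocatingSet_range_of_le_cycleG hw hℓ hM (pathG_le_cycleG _),
    isStrictlyLocatingSet_range_of_le_cycleG hw hℓ (fun a b hab hblock =>
      pathG_le_cycleG _ (hM a b hab hblock)) le_rfl⟩
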